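/- arXiv:1908.10742 — 4 statements merged into one kernel-verified Lean document; each statement's English description precedes it below -/
import Mathlib

section
/- For real numbers t and s, the inequality t ≥ 𝟙(s > 0) (where 𝟙(s>0) equals 1 if s > 0 and 0 otherwise) holds if and only if max(-t, s) - max(t + s - 1, 0) ≤ 0. -/
theorem epi_indicator_dc_representation (t s : ℝ) :
    t ≥ (if s > 0 then (1 : ℝ) else 0) ↔ max (-t) s - max (t + s - 1) 0 ≤ 0 := by
  rw [sub_nonpos, max_le_iff, le_max_iff, le_max_iff]
  split_ifs with hs <;> constructor <;> intro h
  · constructor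
    · left; linarith
    · left; linarith
  · rcases h.2 with h2 | h2
    · linarith
    · linarith
  · exact ⟨Or.inr (by linarith), Or.inr (by linarith)⟩
  · rcases h.1 with h1 | h1 <;> linarith
end

section
/- Let f : ℝⁿ → ℝ be convex, g : ℝⁿ → ℝ be convex and differentiable, c > 0, and let x̄ belong to a convex set C. If x⁺ minimizes x ↦ f(x) - (g(x̄) + ∇g(x̄)ᵀ(x - x̄)) + (c/2)‖x - x̄‖² over C and x̄ ∈ C, then (f - g)(x⁺) + (c/2)‖x⁺ - x̄‖² ≤ (f - g)(x̄). -/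
open Filter Topology

lemma convex_gradient_ineq {n : ℕ} (g : EuclideanSpace ℝ (Fin n) → ℝ)
    (hg : ConvexOn ℝ Set.univ g) (x v : EuclideanSpace ℝ (Fin n)) (G : EuclideanSpace ℝ (Fin n))
    (hG : HasGradientAt g G x) :
    (inner ℝ G (v - x) : ℝ) ≤ g v - g x := by
  set d := v - x with hd
  have hline : HasDerivAt (fun t : ℝ => g (x + t • d)) (inner ℝ G d : ℝ) 0 := by
    have h1 : HasDerivAt (fun t : ℝ => x + t • d) d 0 := by
      simpa using ((hasDerivAt_id (0:ℝ)).smul_const d).const_add x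
    have hG' : HasFDerivAt g ((InnerProductSpace.toDual ℝ _) G) (x + (0:ℝ) • d) := by
      simpa using hG.hasFDerivAt
    have h2 := hG'.comp_hasDerivAt 0 h1
    simp at h2
    exact h2
  have hslope : Tendsto (slope (fun t : ℝ => g (x + t • d)) 0) (𝓝[>] 0) (𝓝 (inner ℝ G d : ℝ)) :=
    (hasDerivAt_iff_tendsto_slope.mp hline).mono_left
      (nhdsWithin_mono 0 (fun t ht => ne_of_gt ht))
  have hev : ∀ᶠ t in 𝓝[>] (0:ℝ), slope (fun t : ℝ => g (x + t • d)) 0 t ≤ g v - g x := by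
    filter_upwards [Ioo_mem_nhdsGT_of_mem (by norm_num : (0:ℝ) ∈ Set.Ico 0 1)] with t ht
    obtain ⟨ht0, ht1⟩ := ht
    have hconv := hg.2 (Set.mem_univ x) (Set.mem_univ v)
      (by linarith : (0:ℝ) ≤ 1 - t) (le_of_lt ht0) (by ring)
    have hxv : x + t • d = (1 - t) • x + t • v := by
      simp [hd, smul_sub, sub_smul]; abel
    rw [slope_def_field]
    have : g (x + t • d) ≤ (1 - t) * g x + t * g v := by
      rw [hxv]; simpa [smul_eq_mul] using hconv
    have h0 : (0:ℝ) • d = 0 := zero_smul _ _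
    rw [h0, add_zero, sub_zero, div_le_iff₀ ht0]
    nlinarith
  exact le_of_tendsto hslope hev

theorem dc_proximal_step_sufficient_decrease {n : ℕ}
    (f g : EuclideanSpace ℝ (Fin n) → ℝ)
    (g' : EuclideanSpace ℝ (Fin n) → EuclideanSpace ℝ (Fin n))
    (hf : ConvexOn ℝ Set.univ f) (hg : ConvexOn ℝ Set.univ g)
    (hg' : ∀ x, HasGradientAt g (g' x) x)
    (c : ℝ) (hc : 0 < c)
    (C : Set (EuclideanSpace ℝ (Fin n))) (hC : Convex ℝ C)
    (xbar xplus : EuclideanSpace ℝ (Fin n)) (hxbar : xbar ∈ C) (hxplus : xplus ∈ C)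
    (hmin : ∀ x ∈ C,
      f xplus - (g xbar + (inner ℝ (g' xbar) (xplus - xbar) : ℝ)) +
          c / 2 * ‖xplus - xbar‖ ^ 2 ≤
        f x - (g xbar + (inner ℝ (g' xbar) (x - xbar) : ℝ)) +
          c / 2 * ‖x - xbar‖ ^ 2) :
    (f xplus - g xplus) + c / 2 * ‖xplus - xbar‖ ^ 2 ≤ f xbar - g xbar := by
  have h1 := hmin xbar hxbar
  simp only [sub_self, inner_zero_right, norm_zero] at h1
  have h2 := convex_gradient_ineq g hg xbar xplus (g' xbar) (hg' xbar)
  nlinarith [h2, h1]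
end

section
/- Let Z be a bounded real random variable, u(t) = ξ₁·max(0,t) - ξ₂·max(0,-t) with 0 ≤ ξ₁ < 1 < ξ₂, and γ = (1-ξ₁)/(ξ₂-ξ₁). Then the optimized certainty equivalent 𝒪_u(Z) := sup_{η∈ℝ} (η + E[u(Z - η)]) satisfies 𝒪_u(Z) = ξ₁·E[Z] + (1-ξ₁)·sup_{η∈ℝ} (η - (1/γ)·E[max(0, η - Z)]). -/
open MeasureTheory

theorem oce_piecewise_linear_mean_cvar
    {Ω : Type*} [MeasurableSpace Ω] (μ : Measure Ω) [IsProbabilityMeasure μ]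
    (Z : Ω → ℝ) (hmeas : Measurable Z) (M : ℝ) (hbdd : ∀ ω, |Z ω| ≤ M)
    (ξ₁ ξ₂ γ : ℝ) (h1 : 0 ≤ ξ₁) (h2 : ξ₁ < 1) (h3 : 1 < ξ₂)
    (hγ : γ = (1 - ξ₁) / (ξ₂ - ξ₁)) :
    (⨆ η : ℝ, (η + ∫ ω, (ξ₁ * max 0 (Z ω - η) - ξ₂ * max 0 (η - Z ω)) ∂μ)) =
      ξ₁ * (∫ ω, Z ω ∂μ) +
        (1 - ξ₁) * ⨆ η : ℝ, (η - (1 / γ) * ∫ ω, max 0 (η - Z ω) ∂μ) := by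
  have h12 : (0:ℝ) < 1 - ξ₁ := by linarith
  have h21 : (0:ℝ) < ξ₂ - ξ₁ := by linarith
  have hγpos : 0 < γ := by rw [hγ]; positivity
  have hγinv : 1 / γ = (ξ₂ - ξ₁) / (1 - ξ₁) := by
    rw [hγ, one_div_div]
  have hγge : (1:ℝ) ≤ 1 / γ := by
    rw [hγinv, le_div_iff₀ h12]; linarith
  -- integrability of Z
  have hZint : Integrable Z μ :=
    (integrable_const M).mono' hmeas.aestronglyMeasurable
      (ae_of_all _ fun ω => by simpa using hbdd ω)
  -- integrability of the positive-part functions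
  have hImeas : ∀ η : ℝ, Measurable fun ω => max 0 (η - Z ω) := fun η =>
    measurable_const.max (measurable_const.sub hmeas)
  have hIint : ∀ η : ℝ, Integrable (fun ω => max 0 (η - Z ω)) μ := by
    intro η
    refine (integrable_const (|η| + |M|)).mono' (hImeas η).aestronglyMeasurable
      (ae_of_all _ fun ω => ?_)
    have h := hbdd ω
    rw [Real.norm_eq_abs, abs_of_nonneg (le_max_left _ _)]
    rcases abs_le.mp h with ⟨hl, hr⟩
    rcases abs_le.mp (le_refl |η|) with ⟨hl2, hr2⟩
    have hM : M ≤ |M| := le_abs_self M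
    rcases abs_le.mp (le_refl |M|) with ⟨hl3, hr3⟩
    apply max_le (by positivity)
    linarith
  set f : ℝ → ℝ := fun η => η - (1 / γ) * ∫ ω, max 0 (η - Z ω) ∂μ with hf
  -- pointwise identity
  have hpt : ∀ η : ℝ, (η + ∫ ω, (ξ₁ * max 0 (Z ω - η) - ξ₂ * max 0 (η - Z ω)) ∂μ)
      = ξ₁ * (∫ ω, Z ω ∂μ) + (1 - ξ₁) * f η := by
    intro η
    have key : ∀ ω, ξ₁ * max 0 (Z ω - η) - ξ₂ * max 0 (η - Z ω)
        = ξ₁ * (Z ω - η) - (ξ₂ - ξ₁) * max 0 (η - Z ω) := by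
      intro ω
      have : max 0 (Z ω - η) = (Z ω - η) + max 0 (η - Z ω) := by
        rcases le_total (Z ω) η with h | h
        · rw [max_eq_left (by linarith), max_eq_right (by linarith)]; ring
        · rw [max_eq_right (by linarith), max_eq_left (by linarith)]; ring
      rw [this]; ring
    have hint1 : Integrable (fun ω => ξ₁ * (Z ω - η)) μ :=
      ((hZint.sub (integrable_const η)).const_mul ξ₁)
    have hint2 : Integrable (fun ω => (ξ₂ - ξ₁) * max 0 (η - Z ω)) μ :=
      ((hIint η).const_mul _)
    calc η + ∫ ω, (ξ₁ * max 0 (Z ω - η) - ξ₂ * max 0 (η - Z ω)) ∂μ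
        = η + ∫ ω, (ξ₁ * (Z ω - η) - (ξ₂ - ξ₁) * max 0 (η - Z ω)) ∂μ := by
          congr 1; exact integral_congr_ae (ae_of_all _ key)
      _ = η + (ξ₁ * ∫ ω, (Z ω - η) ∂μ - (ξ₂ - ξ₁) * ∫ ω, max 0 (η - Z ω) ∂μ) := by
          rw [integral_sub hint1 hint2, integral_const_mul, integral_const_mul]
      _ = η + (ξ₁ * ((∫ ω, Z ω ∂μ) - η) - (ξ₂ - ξ₁) * ∫ ω, max 0 (η - Z ω) ∂μ) := by
          rw [integral_sub hZint (integrable_const η), integral_const]; simp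
      _ = ξ₁ * (∫ ω, Z ω ∂μ) + (1 - ξ₁) * f η := by
          rw [hf]; simp only
          rw [hγinv]
          field_simp
          ring
  -- boundedness of f
  have hfb : ∀ η, f η ≤ M := by
    intro η
    have hIlb : max 0 (η - M) ≤ ∫ ω, max 0 (η - Z ω) ∂μ := by
      have : (max 0 (η - M)) = ∫ _ω, max 0 (η - M) ∂μ := by
        rw [integral_const]; simp
      rw [this]
      refine integral_mono (integrable_const _) (hIint η) fun ω => ?_
      exact max_le_max le_rfl (by have := (abs_le.mp (hbdd ω)).2; linarith)
    have hInn : 0 ≤ ∫ ω, max 0 (η - Z ω) ∂μ :=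
      integral_nonneg fun ω => le_max_left _ _
    rcases le_total η M with h | h
    · have : (1/γ) * ∫ ω, max 0 (η - Z ω) ∂μ ≥ 0 := by positivity
      simp only [hf]; linarith
    · have h1' : max 0 (η - M) = η - M := max_eq_right (by linarith)
      have hA : η - M ≤ ∫ ω, max 0 (η - Z ω) ∂μ := h1' ▸ hIlb
      have : (η - M) ≤ (1/γ) * ∫ ω, max 0 (η - Z ω) ∂μ := by nlinarith [hInn, hγge]
      simp only [hf]; linarith
  have hbddAbove : BddAbove (Set.range f) := ⟨M, by rintro x ⟨η, rfl⟩; exact hfb η⟩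
  -- map sup through affine map
  have hmap : (fun x => ξ₁ * (∫ ω, Z ω ∂μ) + (1 - ξ₁) * x) (⨆ η, f η)
      = ⨆ η, (ξ₁ * (∫ ω, Z ω ∂μ) + (1 - ξ₁) * f η) := by
    refine Monotone.map_ciSup_of_continuousAt (f := fun x => ξ₁ * (∫ ω, Z ω ∂μ) + (1 - ξ₁) * x) ?_ ?_ hbddAbove
    · exact (continuous_const.add (continuous_const.mul continuous_id)).continuousAt
    · intro a b hab
      simp only
      have : (1 - ξ₁) * a ≤ (1 - ξ₁) * b := by nlinarith
      linarith
  simp only at hmap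
  rw [show (⨆ η : ℝ, (η + ∫ ω, (ξ₁ * max 0 (Z ω - η) - ξ₂ * max 0 (η - Z ω)) ∂μ))
      = ⨆ η, (ξ₁ * (∫ ω, Z ω ∂μ) + (1 - ξ₁) * f η) from by simp_rw [hpt]]
  exact hmap.symm
end

section
/- Let Z be a real random variable with finite variance, τ > 0 with sup Z - inf Z ≤ τ (Z essentially bounded), and u the truncated quadratic utility u(t) = t - t²/(2τ) for t ≤ τ, u(t) = τ/2 otherwise. Then sup_{η∈ℝ} (η + E[u(Z - η)]) = E[Z] - Var(Z)/(2τ), attained at η* = E[Z]. -/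
open MeasureTheory

private lemma int_of_bdd {Ω : Type*} [MeasurableSpace Ω] {μ : Measure Ω} [IsFiniteMeasure μ]
    {f : Ω → ℝ} (hf : Measurable f) {C : ℝ} (h : ∀ ω, |f ω| ≤ C) :
    Integrable f μ :=
  (integrable_const C).mono' hf.aestronglyMeasurable
    (Filter.Eventually.of_forall (by simpa using h))

theorem oce_truncated_quadratic_mean_variance
    {Ω : Type*} [MeasurableSpace Ω] (μ : Measure Ω) [IsProbabilityMeasure μ]
    (Z : Ω → ℝ) (hmeas : Measurable Z)
    (m M τ : ℝ) (hτ : 0 < τ)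
    (hbdd : ∀ ω, m ≤ Z ω ∧ Z ω ≤ M) (hrange : M - m ≤ τ) :
    (⨆ η : ℝ, (η + ∫ ω,
        (if Z ω - η ≤ τ then (Z ω - η) - (Z ω - η) ^ 2 / (2 * τ) else τ / 2) ∂μ)) =
      (∫ ω, Z ω ∂μ) - (∫ ω, (Z ω - ∫ ω', Z ω' ∂μ) ^ 2 ∂μ) / (2 * τ) ∧
    ((∫ ω, Z ω ∂μ) + ∫ ω,
        (if Z ω - (∫ ω', Z ω' ∂μ) ≤ τ then
          (Z ω - ∫ ω', Z ω' ∂μ) - (Z ω - ∫ ω', Z ω' ∂μ) ^ 2 / (2 * τ)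
        else τ / 2) ∂μ) =
      (∫ ω, Z ω ∂μ) - (∫ ω, (Z ω - ∫ ω', Z ω' ∂μ) ^ 2 ∂μ) / (2 * τ) := by
  have hml : ∀ ω, m ≤ Z ω := fun ω => (hbdd ω).1
  have hMl : ∀ ω, Z ω ≤ M := fun ω => (hbdd ω).2
  have h2τ : (0:ℝ) < 2 * τ := by linarith
  have hZb : ∀ ω, |Z ω| ≤ |m| + |M| := by
    intro ω
    rw [abs_le]
    constructor
    · nlinarith [neg_abs_le m, hml ω, abs_nonneg M]
    · nlinarith [le_abs_self M, hMl ω, abs_nonneg m]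
  have hZint : Integrable Z μ := int_of_bdd hmeas hZb
  have hsubint : ∀ a : ℝ, Integrable (fun ω => Z ω - a) μ :=
    fun a => hZint.sub (integrable_const a)
  have hsqb : ∀ (a : ℝ) (ω : Ω), |(Z ω - a) ^ 2| ≤ (|m| + |M| + |a|) ^ 2 := by
    intro a ω
    rw [abs_of_nonneg (sq_nonneg _)]
    have h1 : |Z ω - a| ≤ |m| + |M| + |a| := by
      rw [abs_le]
      constructor
      · linarith [neg_abs_le (Z ω), hZb ω, le_abs_self a, (abs_le.mp (hZb ω)).1]
      · linarith [le_abs_self (Z ω), (abs_le.mp (hZb ω)).2, neg_abs_le a]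
    nlinarith [abs_nonneg (Z ω - a), sq_abs (Z ω - a)]
  have hsqint : ∀ a : ℝ, Integrable (fun ω => (Z ω - a) ^ 2) μ :=
    fun a => int_of_bdd ((hmeas.sub measurable_const).pow_const 2) (hsqb a)
  set E := ∫ ω, Z ω ∂μ with hEdef
  have hintc : ∀ c : ℝ, (∫ (_ : Ω), c ∂μ) = c := by intro c; simp
  have hEm : m ≤ E := by
    rw [hEdef]
    calc m = ∫ (_ : Ω), m ∂μ := (hintc m).symm
    _ ≤ ∫ ω, Z ω ∂μ := integral_mono (integrable_const m) hZint hml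
  have hEM : E ≤ M := by
    rw [hEdef]
    calc (∫ ω, Z ω ∂μ) ≤ ∫ (_ : Ω), M ∂μ := integral_mono hZint (integrable_const M) hMl
    _ = M := hintc M
  have hsub_int : ∀ a : ℝ, (∫ ω, (Z ω - a) ∂μ) = E - a := by
    intro a
    rw [integral_sub hZint (integrable_const a), hintc, hEdef]
  have hvar : ∀ a : ℝ, (∫ ω, (Z ω - E) ^ 2 ∂μ) ≤ ∫ ω, (Z ω - a) ^ 2 ∂μ := by
    intro a
    have h1 : ∀ ω, (Z ω - a) ^ 2 = (Z ω - E) ^ 2 + (E - a) * (2 * Z ω - a - E) := by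
      intro ω; ring
    have i0 : Integrable (fun ω => 2 * Z ω) μ := hZint.const_mul 2
    have i1 : Integrable (fun ω => 2 * Z ω - a) μ := i0.sub (integrable_const a)
    have i2 : Integrable (fun ω => 2 * Z ω - a - E) μ := i1.sub (integrable_const E)
    have hlin : Integrable (fun ω => (E - a) * (2 * Z ω - a - E)) μ := i2.const_mul _
    have h3 : (∫ ω, (Z ω - a) ^ 2 ∂μ)
        = (∫ ω, (Z ω - E) ^ 2 ∂μ) + (E - a) * (2 * E - a - E) := by
      simp_rw [h1]
      rw [integral_add (hsqint E) hlin, integral_const_mul,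
        integral_sub i1 (integrable_const E),
        integral_sub i0 (integrable_const a), integral_const_mul, hintc,
        hintc, ← hEdef]
    nlinarith [sq_nonneg (E - a)]
  have hval : E + (∫ ω, (if Z ω - E ≤ τ then (Z ω - E) - (Z ω - E) ^ 2 / (2 * τ) else τ / 2) ∂μ)
      = E - (∫ ω, (Z ω - E) ^ 2 ∂μ) / (2 * τ) := by
    have h1 : (fun ω => if Z ω - E ≤ τ then (Z ω - E) - (Z ω - E) ^ 2 / (2 * τ) else τ / 2)
        = fun ω => (Z ω - E) - (Z ω - E) ^ 2 / (2 * τ) :=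
      funext fun ω => if_pos (by linarith [hMl ω])
    rw [h1, integral_sub (hsubint E) ((hsqint E).div_const (2 * τ)), hsub_int, integral_div]
    ring
  have hub : ∀ η : ℝ, η + (∫ ω,
      (if Z ω - η ≤ τ then (Z ω - η) - (Z ω - η) ^ 2 / (2 * τ) else τ / 2) ∂μ)
      ≤ E - (∫ ω, (Z ω - E) ^ 2 ∂μ) / (2 * τ) := by
    intro η
    set a := max η m with ha
    have hWmeas : Measurable (fun ω => min (Z ω - η) τ) :=
      (hmeas.sub measurable_const).min measurable_const
    have hWb : ∀ ω, |min (Z ω - η) τ| ≤ |m| + |M| + |η| + |τ| := by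
      intro ω
      rw [abs_le]
      refine ⟨le_min ?_ ?_, (min_le_right _ _).trans ?_⟩
      · nlinarith [hml ω, neg_abs_le m, le_abs_self η, abs_nonneg M, abs_nonneg τ]
      · nlinarith [neg_abs_le τ, abs_nonneg m, abs_nonneg M, abs_nonneg η]
      · nlinarith [le_abs_self τ, abs_nonneg m, abs_nonneg M, abs_nonneg η]
    have hWint : Integrable (fun ω => min (Z ω - η) τ) μ := int_of_bdd hWmeas hWb
    have hW2b : ∀ ω, |(min (Z ω - η) τ) ^ 2| ≤ (|m| + |M| + |η| + |τ|) ^ 2 := by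
      intro ω
      rw [abs_of_nonneg (sq_nonneg _)]
      nlinarith [hWb ω, abs_nonneg (min (Z ω - η) τ), sq_abs (min (Z ω - η) τ)]
    have hW2int : Integrable (fun ω => (min (Z ω - η) τ) ^ 2) μ :=
      int_of_bdd (hWmeas.pow_const 2) hW2b
    have heq : (fun ω => if Z ω - η ≤ τ then (Z ω - η) - (Z ω - η) ^ 2 / (2 * τ) else τ / 2)
        = fun ω => min (Z ω - η) τ - (min (Z ω - η) τ) ^ 2 / (2 * τ) := by
      funext ω
      by_cases h : Z ω - η ≤ τ
      · rw [if_pos h, min_eq_left h]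
      · rw [if_neg h, min_eq_right (le_of_not_ge h)]
        field_simp
        ring
    have hpt : ∀ ω, min (Z ω - η) τ - (min (Z ω - η) τ) ^ 2 / (2 * τ)
        ≤ (Z ω - η) - (Z ω - a) ^ 2 / (2 * τ) := by
      intro ω
      rcases le_total η m with hc | hc
      · rw [ha, max_eq_right hc]
        rcases le_or_gt (Z ω - η) τ with h | h
        · rw [min_eq_left h]
          have hle : (Z ω - m) ^ 2 ≤ (Z ω - η) ^ 2 := by nlinarith [hml ω]
          linarith [div_le_div_of_nonneg_right hle h2τ.le]
        · rw [min_eq_right h.le]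
          have hs0 : 0 ≤ Z ω - m := by linarith [hml ω]
          have hsτ : Z ω - m ≤ τ := by linarith [hMl ω]
          have hcpos : 0 ≤ m - η := by linarith
          have hlt : τ - (Z ω - m) < m - η := by linarith
          have hp : (τ - (Z ω - m)) * (τ - (Z ω - m)) ≤ (m - η) * τ :=
            mul_le_mul hlt.le (by linarith) (by linarith) hcpos
          have key : (Z ω - m) ^ 2 ≤ (Z ω - η - (τ - τ ^ 2 / (2 * τ))) * (2 * τ) := by
            have hττ : τ - τ ^ 2 / (2 * τ) = τ / 2 := by field_simp; ring
            rw [hττ]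
            nlinarith [mul_nonneg hcpos hτ.le]
          have := (div_le_iff₀ h2τ).mpr key
          linarith
      · rw [ha, max_eq_left hc, min_eq_left (by linarith [hMl ω] : Z ω - η ≤ τ)]
    rw [heq]
    have hrhsint : Integrable (fun ω => (Z ω - η) - (Z ω - a) ^ 2 / (2 * τ)) μ :=
      (hsubint η).sub ((hsqint a).div_const (2 * τ))
    have hlhsint : Integrable
        (fun ω => min (Z ω - η) τ - (min (Z ω - η) τ) ^ 2 / (2 * τ)) μ :=
      hWint.sub (hW2int.div_const (2 * τ))
    have hmono := integral_mono hlhsint hrhsint hpt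
    have hrhs : (∫ ω, ((Z ω - η) - (Z ω - a) ^ 2 / (2 * τ)) ∂μ)
        = (E - η) - (∫ ω, (Z ω - a) ^ 2 ∂μ) / (2 * τ) := by
      rw [integral_sub (hsubint η) ((hsqint a).div_const (2 * τ)), hsub_int, integral_div]
    rw [hrhs] at hmono
    have hv : (∫ ω, (Z ω - E) ^ 2 ∂μ) / (2 * τ) ≤ (∫ ω, (Z ω - a) ^ 2 ∂μ) / (2 * τ) :=
      div_le_div_of_nonneg_right (hvar a) h2τ.le
    linarith
  constructor
  · refine le_antisymm (ciSup_le hub) ?_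
    have hbdd' : BddAbove (Set.range fun η : ℝ => η + ∫ ω,
        (if Z ω - η ≤ τ then (Z ω - η) - (Z ω - η) ^ 2 / (2 * τ) else τ / 2) ∂μ) :=
      ⟨_, by rintro x ⟨η, rfl⟩; exact hub η⟩
    calc E - (∫ ω, (Z ω - E) ^ 2 ∂μ) / (2 * τ)
        = E + ∫ ω, (if Z ω - E ≤ τ then (Z ω - E) - (Z ω - E) ^ 2 / (2 * τ) else τ / 2) ∂μ :=
          hval.symm
      _ ≤ _ := le_ciSup hbdd' E
  · exact hval
end
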